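/- For any modal formula A, the following are equivalent: (1) A is a theorem of MNPF; (2) A is valid in all transitive MNP-frames; (3) A is valid in all finite transitive MNP-frames. -/

import Mathlib

/-- Modal formulas: variables, ⊥, →, □. -/
inductive Fml : Type
  | var : ℕ → Fml
  | bot : Fml
  | imp : Fml → Fml → Fml
  | box : Fml → Fml
  deriving DecidableEq

namespace Fml

/-- ¬A is an abbreviation for A → ⊥. -/
def neg (A : Fml) : Fml := imp A bot

/-- ⊤ is an abbreviation for ¬⊥. -/
def top : Fml := neg bot

/-- A ∧ B is an abbreviation for ¬(A → ¬B). -/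
def and (A B : Fml) : Fml := neg (imp A (neg B))

/-- Uniform substitution. -/
def subst (σ : ℕ → Fml) : Fml → Fml
  | var n => σ n
  | bot => bot
  | imp A B => imp (subst σ A) (subst σ B)
  | box A => box (subst σ A)

end Fml

/-- A formula is a propositional tautology if it is true under every valuation
that respects ⊥ and →, treating variables and boxed formulas as atoms. -/
def IsTautology (A : Fml) : Prop :=
  ∀ val : Fml → Bool,
    (val Fml.bot = false) →
    (∀ B C : Fml, val (Fml.imp B C) = (!(val B) || val C)) →
    val A = true

/-- Provability in the extension of the logic MN by the axioms in `Ax`: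
axioms are all propositional tautologies and the members of `Ax`; the rules
are Modus Ponens, Necessitation, and RM. -/
inductive MNProv (Ax : Fml → Prop) : Fml → Prop
  | taut {A : Fml} : IsTautology A → MNProv Ax A
  | ax {A : Fml} : Ax A → MNProv Ax A
  | mp {A B : Fml} : MNProv Ax (A.imp B) → MNProv Ax A → MNProv Ax B
  | nec {A : Fml} : MNProv Ax A → MNProv Ax A.box
  | rm {A B : Fml} : MNProv Ax (A.imp B) → MNProv Ax (A.box.imp B.box)

/-- The axiom P : ¬□⊥. -/
def AxP : Fml → Prop := fun A => A = (Fml.box Fml.bot).neg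

/-- The axiom scheme D : ¬(□B ∧ □¬B). -/
def AxD : Fml → Prop := fun A => ∃ B : Fml, A = ((B.box).and (B.neg.box)).neg

/-- The axiom scheme 4 : □B → □□B. -/
def AxF : Fml → Prop := fun A => ∃ B : Fml, A = B.box.imp B.box.box

def MN : Fml → Prop := MNProv (fun _ => False)
def MNP : Fml → Prop := MNProv AxP
def MND : Fml → Prop := MNProv AxD
def MNF : Fml → Prop := MNProv AxF
def MNPF : Fml → Prop := MNProv (fun A => AxP A ∨ AxF A)
def MNDF : Fml → Prop := MNProv (fun A => AxD A ∨ AxF A)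

/-- An MN-frame: a nonempty set `W` together with a relation between worlds and
nonempty subsets of `W` satisfying monotonicity. -/
structure MNFrame (W : Type*) where
  nonempty : Nonempty W
  rel : W → Set W → Prop
  rel_nonempty : ∀ (x : W) (V : Set W), rel x V → V.Nonempty
  mono : ∀ (x : W) (V U : Set W), rel x V → V ⊆ U → rel x U

/-- `Sat` is a satisfaction relation on the MN-frame `F`. -/
structure IsSat {W : Type*} (F : MNFrame W) (Sat : W → Fml → Prop) : Prop where
  bot : ∀ x : W, ¬ Sat x Fml.bot
  imp : ∀ (x : W) (A B : Fml), Sat x (A.imp B) ↔ (Sat x A → Sat x B)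
  box : ∀ (x : W) (A : Fml), Sat x A.box ↔ ∀ V : Set W, F.rel x V → ∃ y ∈ V, Sat y A

/-- A formula is valid in an MN-frame if it is satisfied at every world under
every satisfaction relation on the frame. -/
def Valid {W : Type*} (F : MNFrame W) (A : Fml) : Prop :=
  ∀ Sat : W → Fml → Prop, IsSat F Sat → ∀ x : W, Sat x A

/-- Transitivity of an MN-frame. -/
def MNFrame.IsTransitive {W : Type*} (F : MNFrame W) : Prop :=
  ∀ (x : W) (V : Set W) (U : W → Set W),
    F.rel x V → (∀ y ∈ V, F.rel y (U y)) → F.rel x (⋃ y ∈ V, U y)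

/-- MNP-frames: every world is related to some subset. -/
def MNFrame.IsMNP {W : Type*} (F : MNFrame W) : Prop :=
  ∀ x : W, ∃ V : Set W, F.rel x V

/-- MND-frames: every world is related to `V` or to its complement. -/
def MNFrame.IsMND {W : Type*} (F : MNFrame W) : Prop :=
  ∀ (x : W) (V : Set W), F.rel x V ∨ F.rel x Vᶜ

/-!
Soundness is an induction on derivations: axiom P holds because every world has a
neighbourhood, and axiom 4 is transitivity read through the truth condition of `□`.

For completeness, a non-theorem `A` is refuted in a finite canonical model. Its worlds are the
consistent ways of deciding each subformula of `A`, a world being represented by the conjunction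
of the corresponding literals. A world `t` is related to `V` when `V` is inhabited and, for each
`□B ∈ t`, contains a world with `B` and a world with `□B`. The second witness makes the frame
transitive, and axiom P makes it an MNP-frame. In the truth lemma, a world without `□C` is
related to the set of worlds without `C`: for `□B` in that world, `B → C` would give `□B → □C`
by RM, and `□B → C` would give it by axiom 4 and RM.
-/

open Fml

namespace Fml

def subformulas : Fml → Finset Fml
  | var n => {var n}
  | bot => {bot}
  | imp B C => insert (imp B C) (B.subformulas ∪ C.subformulas)
  | box B => insert (box B) B.subformulas

theorem mem_subformulas_self (A : Fml) : A ∈ A.subformulas := by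
  cases A <;> simp [subformulas]

theorem subformulas_subset_of_mem {A C : Fml} (h : C ∈ A.subformulas) :
    C.subformulas ⊆ A.subformulas := by
  induction A with
  | var n | bot => simp_all [subformulas]
  | imp B D ihB ihD =>
    simp only [subformulas, Finset.mem_insert, Finset.mem_union] at h
    rcases h with rfl | h | h
    · rfl
    · exact (ihB h).trans (Finset.subset_union_left.trans (Finset.subset_insert _ _))
    · exact (ihD h).trans (Finset.subset_union_right.trans (Finset.subset_insert _ _))
  | box B ihB =>
    simp only [subformulas, Finset.mem_insert] at h
    rcases h with rfl | h
    · rfl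
    · exact (ihB h).trans (Finset.subset_insert _ _)

theorem mem_subformulas_of_imp {A B C : Fml} (h : B.imp C ∈ A.subformulas) :
    B ∈ A.subformulas ∧ C ∈ A.subformulas :=
  ⟨subformulas_subset_of_mem h (by simp [subformulas, mem_subformulas_self]),
    subformulas_subset_of_mem h (by simp [subformulas, mem_subformulas_self])⟩

theorem mem_subformulas_of_box {A B : Fml} (h : B.box ∈ A.subformulas) : B ∈ A.subformulas :=
  subformulas_subset_of_mem h (by simp [subformulas, mem_subformulas_self])

def lit (s : Finset Fml) (B : Fml) : Fml := if B ∈ s then B else B.neg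

def charFml (s : Finset Fml) : List Fml → Fml
  | [] => top
  | B :: l => (lit s B).and (charFml s l)

theorem charFml_insert_of_not_mem {s : Finset Fml} {B : Fml} {l : List Fml} (hB : B ∉ l) :
    charFml (insert B s) l = charFml s l := by
  induction l with
  | nil => rfl
  | cons C l ih =>
    simp only [List.mem_cons, not_or] at hB
    obtain ⟨hBC, hBl⟩ := hB
    simp only [charFml, lit, Finset.mem_insert, ih hBl, Ne.symm hBC, false_or]

end Fml

namespace MNProv

variable {Ax : Fml → Prop} {A B C φ ψ : Fml}

theorem of_isTautology_imp (hT : IsTautology (A.imp B)) (hA : MNProv Ax A) : MNProv Ax B :=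
  mp (taut hT) hA

theorem of_isTautology_imp₂ (hT : IsTautology (A.imp (B.imp C))) (hA : MNProv Ax A)
    (hB : MNProv Ax B) : MNProv Ax C :=
  mp (of_isTautology_imp hT hA) hB

theorem imp_refl (A : Fml) : MNProv Ax (A.imp A) :=
  taut fun val hbot himp => by grind

theorem and_imp_left (A B : Fml) : MNProv Ax ((A.and B).imp A) :=
  taut fun val hbot himp => by simp only [Fml.and, Fml.neg, himp, hbot]; grind

theorem and_imp_right (A B : Fml) : MNProv Ax ((A.and B).imp B) :=
  taut fun val hbot himp => by simp only [Fml.and, Fml.neg, himp, hbot]; grind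

theorem imp_trans (h₁ : MNProv Ax (A.imp B)) (h₂ : MNProv Ax (B.imp C)) :
    MNProv Ax (A.imp C) :=
  of_isTautology_imp₂ (fun val hbot himp => by simp only [himp]; grind) h₁ h₂

theorem of_neg_neg (h : MNProv Ax A.neg.neg) : MNProv Ax A :=
  of_isTautology_imp (fun val hbot himp => by simp only [Fml.neg, himp, hbot]; grind) h

theorem imp_of_neg_and_neg (h : MNProv Ax (A.and B.neg).neg) : MNProv Ax (A.imp B) :=
  of_isTautology_imp
    (fun val hbot himp => by simp only [Fml.and, Fml.neg, himp, hbot]; grind) h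

theorem imp_of_prov (φ : Fml) (h : MNProv Ax A) : MNProv Ax (φ.imp A) :=
  of_isTautology_imp (fun val hbot himp => by simp only [himp]; grind) h

theorem imp_mp (h₁ : MNProv Ax (φ.imp (A.imp B))) (h₂ : MNProv Ax (φ.imp A)) :
    MNProv Ax (φ.imp B) :=
  of_isTautology_imp₂ (fun val hbot himp => by simp only [himp]; grind) h₁ h₂

theorem imp_imp_of_imp_neg (h : MNProv Ax (φ.imp A.neg)) : MNProv Ax (φ.imp (A.imp B)) :=
  of_isTautology_imp (fun val hbot himp => by simp only [Fml.neg, himp, hbot]; grind) h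

theorem imp_imp_of_imp (h : MNProv Ax (φ.imp B)) : MNProv Ax (φ.imp (A.imp B)) :=
  of_isTautology_imp (fun val hbot himp => by simp only [himp]; grind) h

theorem neg_of_imp_of_imp_neg (h₁ : MNProv Ax (φ.imp A)) (h₂ : MNProv Ax (φ.imp A.neg)) :
    MNProv Ax φ.neg :=
  of_isTautology_imp₂ (fun val hbot himp => by simp only [Fml.neg, himp, hbot]; grind) h₁ h₂

variable (Ax) in
def Consistent (φ : Fml) : Prop := ¬ MNProv Ax φ.neg

theorem Consistent.of_imp (hφ : Consistent Ax φ) (h : MNProv Ax (φ.imp ψ)) : Consistent Ax ψ :=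
  fun hψ => hφ <| of_isTautology_imp₂
    (fun val hbot himp => by simp only [Fml.neg, himp, hbot]; grind) h hψ

theorem Consistent.and_or_and_neg (hφ : Consistent Ax φ) (B : Fml) :
    Consistent Ax (φ.and B) ∨ Consistent Ax (φ.and B.neg) := by
  by_contra! h
  exact hφ <| of_isTautology_imp₂
    (fun val hbot himp => by simp only [Fml.and, Fml.neg, himp, hbot]; grind)
    (of_not_not h.1) (of_not_not h.2)

theorem Consistent.not_imp_neg (h : Consistent Ax (φ.and ψ)) (hA : MNProv Ax (φ.imp A)) :
    ¬ MNProv Ax (ψ.imp A.neg) :=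
  fun hψ => h <| of_isTautology_imp₂
    (fun val hbot himp => by simp only [Fml.and, Fml.neg, himp, hbot]; grind) hA hψ

theorem Consistent.not_imp (h : Consistent Ax (φ.and ψ)) (hA : MNProv Ax (φ.imp A.neg)) :
    ¬ MNProv Ax (ψ.imp A) :=
  fun hψ => h <| of_isTautology_imp₂
    (fun val hbot himp => by simp only [Fml.and, Fml.neg, himp, hbot]; grind) hA hψ

theorem charFml_imp_lit {s : Finset Fml} {l : List Fml} (hB : B ∈ l) :
    MNProv Ax ((charFml s l).imp (lit s B)) := by
  induction l with
  | nil => cases hB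
  | cons C l ih =>
    rcases List.mem_cons.1 hB with rfl | hB
    · exact and_imp_left _ _
    · exact imp_trans (and_imp_right _ _) (ih hB)

theorem Consistent.exists_and_charFml (hφ : Consistent Ax φ) {l : List Fml} (hl : l.Nodup) :
    ∃ s : Finset Fml, (∀ B ∈ s, B ∈ l) ∧ Consistent Ax (φ.and (charFml s l)) := by
  induction l generalizing φ with
  | nil =>
    refine ⟨∅, by simp, hφ.of_imp (ψ := φ.and top) (taut fun val hbot himp => ?_)⟩
    simp only [Fml.and, Fml.neg, Fml.top, himp, hbot]
    grind
  | cons B l ih =>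
    obtain ⟨hBl, hl⟩ := List.nodup_cons.1 hl
    rcases hφ.and_or_and_neg B with hφB | hφB
    · obtain ⟨s, hs, hcon⟩ := ih hφB hl
      refine ⟨insert B s, by grind, ?_⟩
      rw [charFml, lit, if_pos (Finset.mem_insert_self B s), charFml_insert_of_not_mem hBl]
      exact hcon.of_imp <| taut fun val hbot himp => by
        simp only [Fml.and, Fml.neg, himp, hbot]; grind
    · obtain ⟨s, hs, hcon⟩ := ih hφB hl
      refine ⟨s, fun C hC => List.mem_cons_of_mem B (hs C hC), ?_⟩
      rw [charFml, lit, if_neg fun h => hBl (hs B h)]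
      exact hcon.of_imp <| taut fun val hbot himp => by
        simp only [Fml.and, Fml.neg, himp, hbot]; grind

end MNProv

section Semantics

variable {W : Type*}

def MNFrame.Sat (F : MNFrame W) (val : ℕ → Set W) : Fml → W → Prop
  | var n, x => x ∈ val n
  | bot, _ => False
  | imp A B, x => F.Sat val A x → F.Sat val B x
  | box A, x => ∀ V, F.rel x V → ∃ y ∈ V, F.Sat val A y

theorem MNFrame.isSat_sat (F : MNFrame W) (val : ℕ → Set W) :
    IsSat F (fun x A => F.Sat val A x) where
  bot _ := id
  imp _ _ _ := Iff.rfl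
  box _ _ := Iff.rfl

variable {F : MNFrame W} {A B : Fml}

theorem valid_of_isTautology (h : IsTautology A) : Valid F A := by
  classical
  intro Sat hS x
  simpa using h (fun B => decide (Sat x B)) (by simpa using hS.bot x)
    fun B C => by by_cases Sat x B <;> simp [hS.imp, *]

theorem Valid.mp (hAB : Valid F (A.imp B)) (hA : Valid F A) : Valid F B :=
  fun Sat hS x => (hS.imp x A B).1 (hAB Sat hS x) (hA Sat hS x)

theorem Valid.nec (hA : Valid F A) : Valid F A.box := fun Sat hS x =>
  (hS.box x A).2 fun V hV =>
    let ⟨y, hy⟩ := F.rel_nonempty x V hV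
    ⟨y, hy, hA Sat hS y⟩

theorem Valid.rm (hAB : Valid F (A.imp B)) : Valid F (A.box.imp B.box) := fun Sat hS x => by
  rw [hS.imp, hS.box, hS.box]
  intro hA V hV
  obtain ⟨y, hy, hAy⟩ := hA V hV
  exact ⟨y, hy, (hS.imp y A B).1 (hAB Sat hS y) hAy⟩

theorem valid_neg_box_bot (hF : F.IsMNP) : Valid F (box bot).neg := fun Sat hS x => by
  rw [Fml.neg, hS.imp]
  intro h
  obtain ⟨V, hV⟩ := hF x
  obtain ⟨y, -, hy⟩ := (hS.box x bot).1 h V hV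
  exact (hS.bot y hy).elim

theorem valid_box_imp_box_box (hF : F.IsTransitive) (B : Fml) :
    Valid F (B.box.imp B.box.box) := fun Sat hS x => by
  rw [hS.imp, hS.box x B.box]
  intro hB V hV
  by_contra! hV'
  simp only [hS.box, not_forall, not_exists, not_and] at hV'
  choose! U hU hUB using hV'
  obtain ⟨z, hz, hzB⟩ := (hS.box x B).1 hB _ (hF x V U hV hU)
  obtain ⟨y, hy, hzy⟩ := Set.mem_iUnion₂.1 hz
  exact hUB y hy z hzy hzB

theorem MNProv.valid {Ax : Fml → Prop} (h : MNProv Ax A) (hAx : ∀ B, Ax B → Valid F B) :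
    Valid F A := by
  induction h with
  | taut h => exact valid_of_isTautology h
  | ax h => exact hAx _ h
  | mp _ _ ih₁ ih₂ => exact ih₁.mp ih₂
  | nec _ ih => exact ih.nec
  | rm _ ih => exact ih.rm

end Semantics

namespace Canonical

open MNProv

variable {Ax : Fml → Prop} {A₀ B C X φ : Fml}

@[ext]
structure World (Ax : Fml → Prop) (A₀ : Fml) where
  carrier : Finset Fml
  subset : carrier ⊆ A₀.subformulas
  consistent : Consistent Ax (charFml carrier A₀.subformulas.toList)

instance : Finite (World Ax A₀) :=
  Finite.of_injective (fun t : World Ax A₀ => (⟨t.carrier, Finset.mem_powerset.2 t.subset⟩ :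
    A₀.subformulas.powerset)) fun _ _ h => World.ext (congrArg Subtype.val h)

namespace World

noncomputable def fml (t : World Ax A₀) : Fml := charFml t.carrier A₀.subformulas.toList

variable (t : World Ax A₀)

theorem imp_lit (hB : B ∈ A₀.subformulas) : MNProv Ax (t.fml.imp (lit t.carrier B)) :=
  charFml_imp_lit (Finset.mem_toList.2 hB)

theorem imp_of_mem (hB : B ∈ t.carrier) : MNProv Ax (t.fml.imp B) := by
  simpa [lit, hB] using t.imp_lit (t.subset hB)

theorem imp_neg_of_not_mem (hB : B ∈ A₀.subformulas) (h : B ∉ t.carrier) :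
    MNProv Ax (t.fml.imp B.neg) := by
  simpa [lit, h] using t.imp_lit hB

theorem mem_iff_imp (hB : B ∈ A₀.subformulas) : B ∈ t.carrier ↔ MNProv Ax (t.fml.imp B) :=
  ⟨t.imp_of_mem, fun h => by_contra fun hB' =>
    t.consistent (neg_of_imp_of_imp_neg h (t.imp_neg_of_not_mem hB hB'))⟩

theorem bot_not_mem : bot ∉ t.carrier := fun h => t.consistent (t.imp_of_mem h)

theorem imp_mem_iff (h : B.imp C ∈ A₀.subformulas) :
    B.imp C ∈ t.carrier ↔ (B ∈ t.carrier → C ∈ t.carrier) := by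
  obtain ⟨hB, hC⟩ := mem_subformulas_of_imp h
  rw [t.mem_iff_imp h, t.mem_iff_imp hB, t.mem_iff_imp hC]
  refine ⟨imp_mp, fun hBC => ?_⟩
  by_cases hB' : B ∈ t.carrier
  · exact imp_imp_of_imp (hBC (t.imp_of_mem hB'))
  · exact imp_imp_of_imp_neg (t.imp_neg_of_not_mem hB hB')

theorem mem_of_consistent_and (h : Consistent Ax (φ.and t.fml)) (hB : B ∈ A₀.subformulas)
    (hφ : MNProv Ax (φ.imp B)) : B ∈ t.carrier :=
  by_contra fun hB' => h.not_imp_neg hφ (t.imp_neg_of_not_mem hB hB')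

theorem not_mem_of_consistent_and (h : Consistent Ax (φ.and t.fml))
    (hφ : MNProv Ax (φ.imp B.neg)) : B ∉ t.carrier :=
  fun hB => h.not_imp hφ (t.imp_of_mem hB)

theorem consistent_of_box_mem (hP : MNProv Ax (box bot).neg) (hB : B.box ∈ t.carrier) :
    Consistent Ax B :=
  fun h => t.consistent (imp_trans (imp_trans (t.imp_of_mem hB) (rm h)) hP)

theorem consistent_neg_of_box_not_mem (hC : C.box ∈ A₀.subformulas) (h : C.box ∉ t.carrier) :
    Consistent Ax C.neg :=
  fun hC' => h ((t.mem_iff_imp hC).2 (imp_of_prov _ (nec (of_neg_neg hC'))))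

theorem consistent_and_neg_of_imp_box (hX : MNProv Ax (t.fml.imp X.box))
    (hC : C.box ∈ A₀.subformulas) (h : C.box ∉ t.carrier) : Consistent Ax (X.and C.neg) :=
  fun hXC => h ((t.mem_iff_imp hC).2 (imp_trans hX (rm (imp_of_neg_and_neg hXC))))

end World

variable (A₀) in
theorem exists_world (hφ : Consistent Ax φ) :
    ∃ t : World Ax A₀, Consistent Ax (φ.and t.fml) := by
  obtain ⟨s, hs, hcon⟩ := hφ.exists_and_charFml (Finset.nodup_toList A₀.subformulas)
  refine ⟨⟨s, fun B hB => Finset.mem_toList.1 (hs B hB), ?_⟩, hcon⟩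
  exact hcon.of_imp (and_imp_right _ _)

end Canonical

namespace Canonical

open MNProv

variable {Ax : Fml → Prop} {A₀ C : Fml}

def Rel (t : World Ax A₀) (V : Set (World Ax A₀)) : Prop :=
  V.Nonempty ∧ ∀ B : Fml, B.box ∈ t.carrier →
    (∃ u ∈ V, B ∈ u.carrier) ∧ ∃ u ∈ V, B.box ∈ u.carrier

theorem Rel.mono {t : World Ax A₀} {V U : Set (World Ax A₀)} (h : Rel t V) (hVU : V ⊆ U) :
    Rel t U :=
  ⟨h.1.mono hVU, fun B hB =>
    let ⟨⟨u₁, hu₁, h₁⟩, ⟨u₂, hu₂, h₂⟩⟩ := h.2 B hB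
    ⟨⟨u₁, hVU hu₁, h₁⟩, ⟨u₂, hVU hu₂, h₂⟩⟩⟩

theorem rel_setOf_not_mem (h4 : ∀ B : Fml, MNProv Ax (B.box.imp B.box.box)) (t : World Ax A₀)
    (hC : C.box ∈ A₀.subformulas) (h : C.box ∉ t.carrier) :
    Rel t {u | C ∉ u.carrier} := by
  refine ⟨?_, fun B hB => ⟨?_, ?_⟩⟩
  · obtain ⟨u, hu⟩ := exists_world A₀ (t.consistent_neg_of_box_not_mem hC h)
    exact ⟨u, u.not_mem_of_consistent_and hu (imp_refl _)⟩
  · obtain ⟨u, hu⟩ := exists_world A₀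
      (t.consistent_and_neg_of_imp_box (t.imp_of_mem hB) hC h)
    exact ⟨u, u.not_mem_of_consistent_and hu (and_imp_right _ _),
      u.mem_of_consistent_and hu (mem_subformulas_of_box (t.subset hB)) (and_imp_left _ _)⟩
  · obtain ⟨u, hu⟩ := exists_world A₀
      (t.consistent_and_neg_of_imp_box (imp_trans (t.imp_of_mem hB) (h4 B)) hC h)
    exact ⟨u, u.not_mem_of_consistent_and hu (and_imp_right _ _),
      u.mem_of_consistent_and hu (t.subset hB) (and_imp_left _ _)⟩

variable (Ax A₀) in
def frame [Nonempty (World Ax A₀)] : MNFrame (World Ax A₀) where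
  nonempty := inferInstance
  rel := Rel
  rel_nonempty _ _ h := h.1
  mono _ _ _ := Rel.mono

def val (Ax A₀) : ℕ → Set (World Ax A₀) := fun n => {t | var n ∈ t.carrier}

variable [Nonempty (World Ax A₀)]

theorem frame_isTransitive : (frame Ax A₀).IsTransitive := by
  rintro t V U ⟨⟨u, hu⟩, hV⟩ hU
  refine ⟨(hU u hu).1.mono (Set.subset_biUnion_of_mem hu), fun B hB => ?_⟩
  obtain ⟨-, u, hu, huB⟩ := hV B hB
  obtain ⟨⟨w₁, hw₁, h₁⟩, w₂, hw₂, h₂⟩ := (hU u hu).2 B huB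
  exact ⟨⟨w₁, Set.mem_biUnion hu hw₁, h₁⟩, w₂, Set.mem_biUnion hu hw₂, h₂⟩

theorem frame_isMNP (hP : MNProv Ax (box bot).neg) : (frame Ax A₀).IsMNP := fun t => by
  refine ⟨Set.univ, ⟨t, trivial⟩, fun B hB => ⟨?_, t, trivial, hB⟩⟩
  obtain ⟨u, hu⟩ := exists_world A₀ (t.consistent_of_box_mem hP hB)
  exact ⟨u, trivial,
    u.mem_of_consistent_and hu (mem_subformulas_of_box (t.subset hB)) (imp_refl B)⟩

theorem sat_iff_mem (h4 : ∀ B : Fml, MNProv Ax (B.box.imp B.box.box)) (t : World Ax A₀)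
    {B : Fml} (hB : B ∈ A₀.subformulas) :
    (frame Ax A₀).Sat (val Ax A₀) B t ↔ B ∈ t.carrier := by
  induction B generalizing t with
  | var n => rfl
  | bot => exact iff_of_false id t.bot_not_mem
  | imp B C ihB ihC =>
    obtain ⟨hB', hC'⟩ := mem_subformulas_of_imp hB
    rw [t.imp_mem_iff hB, ← ihB t hB', ← ihC t hC']
    rfl
  | box C ih =>
    have hC := mem_subformulas_of_box hB
    refine ⟨fun h => by_contra fun hC' => ?_, fun h V hV => ?_⟩
    · obtain ⟨u, hu, huC⟩ := h _ (rel_setOf_not_mem h4 t hB hC')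
      exact hu ((ih u hC).1 huC)
    · obtain ⟨u, hu, huC⟩ := (hV.2 C h).1
      exact ⟨u, hu, (ih u hC).2 huC⟩

end Canonical

open Canonical MNProv in
theorem exists_finite_countermodel {Ax : Fml → Prop} {A : Fml}
    (hP : MNProv Ax (box bot).neg) (h4 : ∀ B : Fml, MNProv Ax (B.box.imp B.box.box))
    (hA : ¬ MNProv Ax A) :
    ∃ (W : Type) (F : MNFrame W), Finite W ∧ F.IsTransitive ∧ F.IsMNP ∧ ¬ Valid F A := by
  obtain ⟨t, ht⟩ := exists_world A (fun h => hA (of_neg_neg h) : Consistent Ax A.neg)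
  have : Nonempty (World Ax A) := ⟨t⟩
  refine ⟨World Ax A, frame Ax A, inferInstance, frame_isTransitive, frame_isMNP hP,
    fun h => ?_⟩
  exact t.not_mem_of_consistent_and ht (imp_refl _) <|
    (sat_iff_mem h4 t (mem_subformulas_self A)).1 (h _ ((frame Ax A).isSat_sat (val Ax A)) t)

/-- A formula is a theorem of MNPF iff it is valid in all transitive
MNP-frames iff it is valid in all finite transitive MNP-frames. -/
theorem stmt9 (A : Fml) :
    (MNPF A ↔ ∀ (W : Type) (F : MNFrame W), F.IsTransitive → F.IsMNP → Valid F A) ∧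
    (MNPF A ↔ ∀ (W : Type) (F : MNFrame W), Finite W → F.IsTransitive → F.IsMNP → Valid F A) := by
  have sound (h : MNPF A) (W : Type) (F : MNFrame W) (hT : F.IsTransitive) (hP : F.IsMNP) :
      Valid F A := MNProv.valid h <| by
    rintro _ (rfl | ⟨B, rfl⟩)
    exacts [valid_neg_box_bot hP, valid_box_imp_box_box hT B]
  have complete
      (h : ∀ (W : Type) (F : MNFrame W), Finite W → F.IsTransitive → F.IsMNP → Valid F A) :
      MNPF A := by
    by_contra hA
    obtain ⟨W, F, hW, hT, hP, hF⟩ := exists_finite_countermodel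
      (MNProv.ax (Or.inl rfl)) (fun B => MNProv.ax (Or.inr ⟨B, rfl⟩)) hA
    exact hF (h W F hW hT hP)
  exact ⟨⟨sound, fun h => complete fun W F _ => h W F⟩,
    ⟨fun h W F _ => sound h W F, complete⟩⟩
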